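/- Let 0 < α < 1/2, δ > 0, and let (λ_k)_{k≥0} be a summable sequence of positive reals. With c_0(α) = 1 and c_n(α) = 2^{k(α−1/2)+α−1} for n = 2^k + l, 0 ≤ l ≤ 2^k − 1, one has lim_{ε→0⁺} Σ_{k=0}^∞ Σ_{n=0}^∞ exp( −δ² / (8 c_n(α)² ε λ_k) ) = 0. -/

import Mathlib

open MeasureTheory Filter Set Topology
open scoped ENNReal NNReal

noncomputable section

namespace SchilderHilbert

/-- For `n ≥ 1`, the dyadic level `k` with `n = 2^k + l`, `0 ≤ l ≤ 2^k - 1`. -/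
def haarK (n : ℕ) : ℕ := Nat.log 2 n

/-- For `n ≥ 1`, the shift `l` with `n = 2^k + l`, `0 ≤ l ≤ 2^k - 1`. -/
def haarL (n : ℕ) : ℕ := n - 2 ^ Nat.log 2 n

/-- The Haar functions on `[0,1]`. -/
noncomputable def haar (n : ℕ) (t : ℝ) : ℝ :=
  if n = 0 then 1
  else
    if (2 * haarL n : ℝ) / 2 ^ (haarK n + 1) ≤ t ∧
        t < (2 * haarL n + 1 : ℝ) / 2 ^ (haarK n + 1) then
      2 ^ ((haarK n : ℝ) / 2)
    else if (2 * haarL n + 1 : ℝ) / 2 ^ (haarK n + 1) ≤ t ∧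
        t ≤ (2 * haarL n + 2 : ℝ) / 2 ^ (haarK n + 1) then
      -(2 ^ ((haarK n : ℝ) / 2))
    else 0

/-- The Schauder functions, primitives of the Haar functions. -/
noncomputable def schauder (n : ℕ) (t : ℝ) : ℝ := ∫ s in (0:ℝ)..t, haar n s

/-- `∫_{[0,1]} χ_n dF`, the Haar coefficient of an `H`-valued function `F`. -/
noncomputable def haarCoeff {H : Type*} [NormedAddCommGroup H] [NormedSpace ℝ H]
    (F : ℝ → H) (n : ℕ) : H :=
  if n = 0 then F 1 - F 0
  else
    (2 : ℝ) ^ ((haarK n : ℝ) / 2) •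
      ((2 : ℝ) • F ((2 * haarL n + 1 : ℝ) / 2 ^ (haarK n + 1))
        - F ((2 * haarL n + 2 : ℝ) / 2 ^ (haarK n + 1))
        - F ((2 * haarL n : ℝ) / 2 ^ (haarK n + 1)))

/-- The Ciesielski coefficients `c_n(α)`: `c_0(α) = 1` and
`c_n(α) = 2^{k(α-1/2)+α-1}` for `n = 2^k + l`, `0 ≤ l ≤ 2^k - 1`. -/
noncomputable def cCoef (α : ℝ) (n : ℕ) : ℝ :=
  if n = 0 then 1 else 2 ^ ((haarK n : ℝ) * (α - 1/2) + α - 1)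

/-- The `α`-Hölder seminorm on `[0,1]` of an `H`-valued function. -/
noncomputable def holderSemi {H : Type*} [NormedAddCommGroup H] (α : ℝ) (F : ℝ → H) : ℝ :=
  sSup {r : ℝ | ∃ s ∈ Icc (0:ℝ) 1, ∃ t ∈ Icc (0:ℝ) 1, s < t ∧ r = ‖F t - F s‖ / (t - s) ^ α}

/-- Membership in `C_α([0,1];H)`: finite `α`-Hölder seminorm on `[0,1]`. -/
def MemHolder {H : Type*} [NormedAddCommGroup H] (α : ℝ) (F : ℝ → H) : Prop :=
  ∃ C : ℝ, ∀ s ∈ Icc (0:ℝ) 1, ∀ t ∈ Icc (0:ℝ) 1, ‖F t - F s‖ ≤ C * |t - s| ^ α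

/-- Membership in `C_α^0([0,1];H)`: `F(0) = 0`, finite `α`-Hölder seminorm and
vanishing `α`-Hölder modulus of continuity. -/
def MemHolder0 {H : Type*} [NormedAddCommGroup H] (α : ℝ) (F : ℝ → H) : Prop :=
  F 0 = 0 ∧ MemHolder α F ∧
    ∀ ε > 0, ∃ δ > 0, ∀ s ∈ Icc (0:ℝ) 1, ∀ t ∈ Icc (0:ℝ) 1,
      s ≠ t → |t - s| < δ → ‖F t - F s‖ ≤ ε * |t - s| ^ α

/-! The bound `exp u ≥ u^p / p!` turns each term into
`p! (8/δ²)^p · ε^p · λ_k^p · c_n(α)^{2p}`. Since `c_n(α) ≤ n^{α-1/2}`, choosing `p` with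
`2p(1/2 - α) > 1` makes `Σ_n c_n(α)^{2p}` finite, and `Σ_k λ_k^p < ∞` follows from
`Σ_k λ_k < ∞`; so the double series is `O(ε^p)`. -/

end SchilderHilbert

theorem Real.exp_neg_div_le_factorial_mul_pow {a x : ℝ} (ha : 0 < a) (hx : 0 < x) (p : ℕ) :
    Real.exp (-a / x) ≤ p.factorial * (x / a) ^ p := by
  have hu : 0 < a / x := div_pos ha hx
  calc Real.exp (-a / x) = (Real.exp (a / x))⁻¹ := by rw [neg_div, Real.exp_neg]
    _ ≤ ((a / x) ^ p / p.factorial)⁻¹ :=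
      inv_anti₀ (by positivity) (Real.pow_div_factorial_le_exp _ hu.le p)
    _ = p.factorial * (x / a) ^ p := by rw [inv_div, div_eq_mul_inv, ← inv_pow, inv_div]

theorem Summable.pow {ι : Type*} {f : ι → ℝ} (hf : Summable f) {p : ℕ} (hp : p ≠ 0) :
    Summable (fun i => f i ^ p) := by
  refine .of_norm_bounded_eventually hf.abs ?_
  filter_upwards [hf.abs.tendsto_cofinite_zero.eventually_le_const one_pos] with i hi
  rw [Real.norm_eq_abs, abs_pow]
  exact pow_le_of_le_one (abs_nonneg _) hi hp

theorem tsum_tsum_le_tsum_mul_tsum {ι κ : Type*} {f : ι → κ → ℝ} {a : ι → ℝ} {b : κ → ℝ}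
    (hf : ∀ k n, 0 ≤ f k n) (hfab : ∀ k n, f k n ≤ a k * b n)
    (ha : Summable a) (hb : Summable b) :
    ∑' k, ∑' n, f k n ≤ (∑' k, a k) * ∑' n, b n := by
  have hinner : ∀ k, ∑' n, f k n ≤ a k * ∑' n, b n := fun k =>
    calc ∑' n, f k n ≤ ∑' n, a k * b n :=
          Summable.tsum_le_tsum (hfab k)
            (.of_nonneg_of_le (hf k) (hfab k) (hb.mul_left _)) (hb.mul_left _)
      _ = a k * ∑' n, b n := tsum_mul_left
  calc ∑' k, ∑' n, f k n ≤ ∑' k, a k * ∑' n, b n :=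
        Summable.tsum_le_tsum hinner
          (.of_nonneg_of_le (fun k => tsum_nonneg (hf k)) hinner (ha.mul_right _))
          (ha.mul_right _)
    _ = (∑' k, a k) * ∑' n, b n := tsum_mul_right

namespace SchilderHilbert

theorem cCoef_pos (α : ℝ) (n : ℕ) : 0 < cCoef α n := by
  unfold cCoef
  split_ifs <;> positivity

theorem cCoef_le_rpow {α : ℝ} (hα : α ≤ 1 / 2) {n : ℕ} (hn : n ≠ 0) :
    cCoef α n ≤ (n : ℝ) ^ (α - 1 / 2) := by
  have hlt : (n : ℝ) < 2 ^ ((haarK n + 1 : ℕ) : ℝ) := by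
    rw [Real.rpow_natCast]; exact_mod_cast Nat.lt_pow_succ_log_self one_lt_two n
  calc cCoef α n = 2 ^ ((haarK n : ℝ) * (α - 1 / 2) + α - 1) := if_neg hn
    _ ≤ 2 ^ (((haarK n + 1 : ℕ) : ℝ) * (α - 1 / 2)) :=
      Real.rpow_le_rpow_of_exponent_le one_le_two (by push_cast; linarith)
    _ = (2 ^ ((haarK n + 1 : ℕ) : ℝ)) ^ (α - 1 / 2) := Real.rpow_mul zero_le_two _ _
    _ ≤ (n : ℝ) ^ (α - 1 / 2) :=
      Real.rpow_le_rpow_of_nonpos (by positivity) hlt.le (by linarith)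

theorem summable_cCoef_pow {α : ℝ} {m : ℕ} (hm : 1 < m * (1 / 2 - α)) :
    Summable (fun n => cCoef α n ^ m) := by
  have hα : α ≤ 1 / 2 := by
    by_contra! h; nlinarith [(m.cast_nonneg : (0 : ℝ) ≤ m)]
  rw [← summable_nat_add_iff 1]
  refine .of_nonneg_of_le (fun n => pow_nonneg (cCoef_pos α _).le m) (fun n => ?_)
    ((summable_nat_add_iff 1).2 (Real.summable_nat_rpow.2 (by linarith :
      (α - 1 / 2) * m < -1)))
  calc cCoef α (n + 1) ^ m ≤ (((n + 1 : ℕ) : ℝ) ^ (α - 1 / 2)) ^ m :=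
        pow_le_pow_left₀ (cCoef_pos α _).le (cCoef_le_rpow hα n.succ_ne_zero) m
    _ = ((n + 1 : ℕ) : ℝ) ^ ((α - 1 / 2) * m) := by
        rw [Real.rpow_mul (by positivity), Real.rpow_natCast]

/-- **Vanishing of the double exponential series** (step 2 of Lemma 10): for
`0 < α < 1/2`, `δ > 0` and summable positive `(λ_k)`,
`lim_{ε→0⁺} Σ_k Σ_n exp(-δ²/(8 c_n(α)² ε λ_k)) = 0`. -/
theorem tendsto_double_exp_sum
    (α : ℝ) (hα : α ∈ Ioo (0:ℝ) (1/2)) (δ : ℝ) (hδ : 0 < δ)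
    (lam : ℕ → ℝ) (hlam : ∀ k, 0 < lam k) (hsum : Summable lam) :
    Tendsto
      (fun ε : ℝ => ∑' k : ℕ, ∑' n : ℕ,
        Real.exp (-(δ ^ 2) / (8 * (cCoef α n) ^ 2 * ε * lam k)))
      (𝓝[>] (0:ℝ)) (𝓝 0) := by
  have hα' : 0 < 1 - 2 * α := by linarith [hα.2]
  obtain ⟨p, hp⟩ := exists_nat_gt (1 - 2 * α)⁻¹
  have hp0 : p ≠ 0 := by rintro rfl; exact (inv_pos.2 hα').not_gt (by simpa using hp)
  have hpα : 1 < ((2 * p : ℕ) : ℝ) * (1 / 2 - α) := by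
    have := (inv_lt_iff_one_lt_mul₀ hα').1 hp
    push_cast; linarith
  set K : ℝ := p.factorial * (8 / δ ^ 2) ^ p
  set C : ℝ := (∑' k, lam k ^ p) * ∑' n, cCoef α n ^ (2 * p)
  have hterm : ∀ ε > 0, ∀ k n, Real.exp (-(δ ^ 2) / (8 * (cCoef α n) ^ 2 * ε * lam k)) ≤
      K * ε ^ p * lam k ^ p * cCoef α n ^ (2 * p) := fun ε hε k n => by
    have hx : 0 < 8 * cCoef α n ^ 2 * ε * lam k := by
      have := cCoef_pos α n; have := hlam k; positivity
    refine (Real.exp_neg_div_le_factorial_mul_pow (pow_pos hδ 2) hx p).trans_eq ?_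
    rw [pow_mul]; ring
  have hbound : ∀ ε > 0, ∑' k, ∑' n, Real.exp (-(δ ^ 2) / (8 * (cCoef α n) ^ 2 * ε * lam k)) ≤
      K * ε ^ p * C := fun ε hε => by
    refine (tsum_tsum_le_tsum_mul_tsum (fun _ _ => (Real.exp_pos _).le) (hterm ε hε)
      ((hsum.pow hp0).mul_left _) (summable_cCoef_pow hpα)).trans_eq ?_
    rw [tsum_mul_left, mul_assoc]
  have hlim : Tendsto (fun ε : ℝ => K * ε ^ p * C) (𝓝[>] 0) (𝓝 0) :=
    (((continuous_const.mul (continuous_pow p)).mul continuous_const).tendsto' 0 0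
      (by simp [hp0])).mono_left nhdsWithin_le_nhds
  refine tendsto_of_tendsto_of_tendsto_of_le_of_le' tendsto_const_nhds hlim ?_ ?_ <;>
    filter_upwards [self_mem_nhdsWithin] with ε hε
  · exact tsum_nonneg fun k => tsum_nonneg fun n => (Real.exp_pos _).le
  · exact hbound ε hε

end SchilderHilbert
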